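/- Let G : ℝⁿ → ℝ be strongly convex with parameter m > 0 and let Y ⊆ ℝⁿ be a nonempty closed convex set. Define u(λ) = argmin_{u ∈ Y} (G(u) − λᵀu) for λ ∈ ℝⁿ (the argmin exists and is unique). Then u is Lipschitz continuous with constant 1/m: ∥u(λ₁) − u(λ₂)∥ ≤ (1/m)∥λ₁ − λ₂∥ for all λ₁, λ₂. -/

import Mathlib

open RealInnerProductSpace

lemma norm_combo_identity {n : ℕ} (x w : EuclideanSpace ℝ (Fin n)) (t : ℝ) :
    (1 - t) * ‖x‖ ^ 2 + t * ‖w‖ ^ 2 - ‖(1 - t) • x + t • w‖ ^ 2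
      = t * (1 - t) * ‖x - w‖ ^ 2 := by
  have h1 : ‖(1 - t) • x + t • w‖ ^ 2
      = (1 - t) ^ 2 * ‖x‖ ^ 2 + 2 * ((1 - t) * t) * ⟪x, w⟫ + t ^ 2 * ‖w‖ ^ 2 := by
    rw [← real_inner_self_eq_norm_sq, ← real_inner_self_eq_norm_sq,
      ← real_inner_self_eq_norm_sq]
    simp only [inner_add_add_self, inner_smul_left, inner_smul_right, RCLike.ofReal_real_eq_id,
      id, conj_trivial]
    rw [real_inner_comm w x]
    ring
  have h2 : ‖x - w‖ ^ 2 = ‖x‖ ^ 2 - 2 * ⟪x, w⟫ + ‖w‖ ^ 2 := by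
    rw [← real_inner_self_eq_norm_sq, ← real_inner_self_eq_norm_sq,
      ← real_inner_self_eq_norm_sq, inner_sub_sub_self, real_inner_comm w x]
    ring
  rw [h1, h2]; ring

lemma strong_min {n : ℕ} (G : EuclideanSpace ℝ (Fin n) → ℝ) (m : ℝ) (hm : 0 < m)
    (hG : ConvexOn ℝ Set.univ (fun u => G u - (m / 2) * ‖u‖ ^ 2))
    (Y : Set (EuclideanSpace ℝ (Fin n))) (hYconv : Convex ℝ Y)
    (lam x : EuclideanSpace ℝ (Fin n)) (hx : x ∈ Y)
    (hmin : ∀ w ∈ Y, G x - ⟪lam, x⟫ ≤ G w - ⟪lam, w⟫)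
    (w : EuclideanSpace ℝ (Fin n)) (hw : w ∈ Y) :
    G x - ⟪lam, x⟫ + (m / 2) * ‖x - w‖ ^ 2 ≤ G w - ⟪lam, w⟫ := by
  set c : ℝ := (m / 2) * ‖x - w‖ ^ 2 with hc
  set K : ℝ := (G w - ⟪lam, w⟫) - (G x - ⟪lam, x⟫) with hK
  have hc0 : 0 ≤ c := by positivity
  have key : ∀ t : ℝ, 0 < t → t < 1 → (1 - t) * c ≤ K := by
    intro t ht0 ht1
    have hzY : (1 - t) • x + t • w ∈ Y :=
      hYconv hx hw (by linarith) (le_of_lt ht0) (by ring)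
    have hmz := hmin _ hzY
    have hconv := hG.2 (Set.mem_univ x) (Set.mem_univ w)
      (show (0:ℝ) ≤ 1 - t by linarith) (le_of_lt ht0) (by ring)
    simp only [smul_eq_mul] at hconv
    have hnorm := norm_combo_identity x w t
    have hinner : ⟪lam, (1 - t) • x + t • w⟫ = (1 - t) * ⟪lam, x⟫ + t * ⟪lam, w⟫ := by
      rw [inner_add_right, inner_smul_right, inner_smul_right]
    have e : m / 2 * ‖(1 - t) • x + t • w‖ ^ 2
        = m / 2 * ((1 - t) * ‖x‖ ^ 2 + t * ‖w‖ ^ 2) - m / 2 * (t * (1 - t) * ‖x - w‖ ^ 2) := by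
      linear_combination (-(m / 2)) * hnorm
    have hGz : G ((1 - t) • x + t • w)
        ≤ (1 - t) * G x + t * G w - m / 2 * (t * (1 - t) * ‖x - w‖ ^ 2) := by
      nlinarith [hconv, e]
    rw [hinner] at hmz
    have h4 : t * ((1 - t) * c) ≤ t * K := by rw [hc, hK]; nlinarith [hmz, hGz]
    exact le_of_mul_le_mul_left h4 ht0
  by_contra hlt
  push_neg at hlt
  have hKc : K < c := by rw [hK]; linarith
  have hK0 : (0:ℝ) ≤ K := by have := hmin w hw; rw [hK]; linarith
  have hcpos : 0 < c := lt_of_le_of_lt hK0 hKc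
  set t : ℝ := (c - K) / (2 * c) with htdef
  have ht0 : 0 < t := div_pos (by linarith) (by linarith)
  have ht1 : t < 1 := by
    rw [htdef, div_lt_one (by linarith)]
    linarith
  have := key t ht0 ht1
  have htc : t * c = (c - K) / 2 := by
    rw [htdef]; field_simp
  nlinarith

theorem stmt_4 {n : ℕ} (G : EuclideanSpace ℝ (Fin n) → ℝ) (m : ℝ) (hm : 0 < m)
    (hG : ConvexOn ℝ Set.univ (fun u => G u - (m / 2) * ‖u‖ ^ 2))
    (Y : Set (EuclideanSpace ℝ (Fin n))) (hY : Y.Nonempty) (hYc : IsClosed Y)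
    (hYconv : Convex ℝ Y)
    (u : EuclideanSpace ℝ (Fin n) → EuclideanSpace ℝ (Fin n))
    (hu : ∀ lam, u lam ∈ Y ∧ ∀ w ∈ Y, G (u lam) - ⟪lam, u lam⟫ ≤ G w - ⟪lam, w⟫) :
    ∀ lam₁ lam₂, ‖u lam₁ - u lam₂‖ ≤ (1 / m) * ‖lam₁ - lam₂‖ := by
  intro lam₁ lam₂
  set x₁ := u lam₁
  set x₂ := u lam₂
  have h1 := strong_min G m hm hG Y hYconv lam₁ x₁ (hu lam₁).1 (hu lam₁).2 x₂ (hu lam₂).1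
  have h2 := strong_min G m hm hG Y hYconv lam₂ x₂ (hu lam₂).1 (hu lam₂).2 x₁ (hu lam₁).1
  have hns : ‖x₂ - x₁‖ = ‖x₁ - x₂‖ := norm_sub_rev _ _
  have hsum : m * ‖x₁ - x₂‖ ^ 2 ≤ ⟪lam₁ - lam₂, x₁ - x₂⟫ := by
    have hin : ⟪lam₁ - lam₂, x₁ - x₂⟫
        = ⟪lam₁, x₁⟫ - ⟪lam₁, x₂⟫ - ⟪lam₂, x₁⟫ + ⟪lam₂, x₂⟫ := by
      rw [inner_sub_left, inner_sub_right, inner_sub_right]; ring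
    rw [hns] at h2
    nlinarith
  have hcs : ⟪lam₁ - lam₂, x₁ - x₂⟫ ≤ ‖lam₁ - lam₂‖ * ‖x₁ - x₂‖ := real_inner_le_norm _ _
  rcases eq_or_lt_of_le (norm_nonneg (x₁ - x₂)) with h0 | h0
  · rw [← h0]; positivity
  · have h : m * ‖x₁ - x₂‖ ^ 2 ≤ ‖lam₁ - lam₂‖ * ‖x₁ - x₂‖ := le_trans hsum hcs
    rw [one_div, ← div_eq_inv_mul, le_div_iff₀ hm]
    nlinarith
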